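/- Condition (*) holds for the sequence (A_i) if and only if condition (*)' holds for it. -/

import Mathlib

open Filter Topology NormedSpace
open scoped LinearAlgebra.Projectivization

set_option linter.unusedSectionVars false

noncomputable section

namespace CSW

variable {E : Type*} [NormedAddCommGroup E] [InnerProductSpace ℂ E] [FiniteDimensional ℂ E]
variable {V : Type*} [NormedAddCommGroup V] [InnerProductSpace ℂ V] [FiniteDimensional ℂ V]

/-- The exponential `e^T` of a bounded operator, as a unit (invertible element) of the algebra
of continuous linear endomorphisms. -/
def expUnit (T : E →L[ℂ] E) : (E →L[ℂ] E)ˣ where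
  val := exp T
  inv := exp (-T)
  val_inv := by
    letI : NormedAlgebra ℚ (E →L[ℂ] E) := NormedAlgebra.restrictScalars ℚ ℂ (E →L[ℂ] E)
    rw [← exp_add_of_commute (Commute.refl T).neg_right, add_neg_cancel, exp_zero]
  inv_val := by
    letI : NormedAlgebra ℚ (E →L[ℂ] E) := NormedAlgebra.restrictScalars ℚ ℂ (E →L[ℂ] E)
    rw [← exp_add_of_commute (Commute.refl T).neg_left, neg_add_cancel, exp_zero]

/-- `Bseq A i` is `B_i = A_i A_{i-1}⁻¹` (with the junk value `B_0 = 1`). -/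
def Bseq (A : ℕ → (E →L[ℂ] E)ˣ) (i : ℕ) : (E →L[ℂ] E)ˣ := A i * (A (i - 1))⁻¹

/-- Condition (*): for any subsequence, after passing to a further subsequence, `B_{α+1}` and
`B_{α+2}` both converge (in operator norm) to `g e^Λ g⁻¹` for some unitary `g`. -/
def CondStar (A : ℕ → (E →L[ℂ] E)ˣ) (Λ : E →L[ℂ] E) : Prop :=
  ∀ φ : ℕ → ℕ, StrictMono φ → ∃ ψ : ℕ → ℕ, StrictMono ψ ∧ ∃ g : (E →L[ℂ] E)ˣ,
    (g : E →L[ℂ] E) ∈ unitary (E →L[ℂ] E) ∧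
    Tendsto (fun j => (Bseq A (φ (ψ j) + 1) : E →L[ℂ] E)) atTop
      (𝓝 ((g * expUnit Λ * g⁻¹ : (E →L[ℂ] E)ˣ) : E →L[ℂ] E)) ∧
    Tendsto (fun j => (Bseq A (φ (ψ j) + 2) : E →L[ℂ] E)) atTop
      (𝓝 ((g * expUnit Λ * g⁻¹ : (E →L[ℂ] E)ˣ) : E →L[ℂ] E))

/-- Condition (*)' for a given gauge sequence `g`: `g 0 = 1`, each `g i` is unitary,
`B_i g_i e^{-Λ} g_i⁻¹ → Id` and `g_{i-1}⁻¹ g_i → Id`. -/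
def CondStar' (A : ℕ → (E →L[ℂ] E)ˣ) (Λ : E →L[ℂ] E) (g : ℕ → (E →L[ℂ] E)ˣ) : Prop :=
  g 0 = 1 ∧ (∀ i, (g i : E →L[ℂ] E) ∈ unitary (E →L[ℂ] E)) ∧
  Tendsto (fun i => ((Bseq A i * g i * expUnit (-Λ) * (g i)⁻¹ : (E →L[ℂ] E)ˣ) : E →L[ℂ] E))
    atTop (𝓝 1) ∧
  Tendsto (fun i => (((g (i - 1))⁻¹ * g i : (E →L[ℂ] E)ˣ) : E →L[ℂ] E)) atTop (𝓝 1)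

/-- Membership in `G_Λ = {g ∈ G : g Λ g⁻¹ = Λ}`. -/
def InGΛ (Λ : E →L[ℂ] E) (h : (E →L[ℂ] E)ˣ) : Prop :=
  (h : E →L[ℂ] E) * Λ = Λ * (h : E →L[ℂ] E)

/-- Membership in `K_Λ = {g ∈ K : g Λ g⁻¹ = Λ}`. -/
def InKΛ (Λ : E →L[ℂ] E) (h : (E →L[ℂ] E)ˣ) : Prop :=
  (h : E →L[ℂ] E) ∈ unitary (E →L[ℂ] E) ∧ InGΛ Λ h

/-- A (continuous, finite-dimensional) complex representation `ρ` of `G = GL(E)` on a Hermitian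
vector space `V`, mapping unitary elements to unitary elements, together with a self-adjoint
operator `Λ_V` on `V` compatible with `Λ` via `ρ(e^{tΛ}) = e^{tΛ_V}`. -/
structure Rep (Λ : E →L[ℂ] E) (V : Type*) [NormedAddCommGroup V] [InnerProductSpace ℂ V]
    [FiniteDimensional ℂ V] where
  ρ : (E →L[ℂ] E)ˣ →* (V →L[ℂ] V)ˣ
  continuous_ρ : Continuous fun u : (E →L[ℂ] E)ˣ => ((ρ u : (V →L[ℂ] V)ˣ) : V →L[ℂ] V)
  unitary_ρ : ∀ u : (E →L[ℂ] E)ˣ, (u : E →L[ℂ] E) ∈ unitary (E →L[ℂ] E) →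
    ((ρ u : (V →L[ℂ] V)ˣ) : V →L[ℂ] V) ∈ unitary (V →L[ℂ] V)
  ΛV : V →L[ℂ] V
  selfAdjoint_ΛV : IsSelfAdjoint ΛV
  exp_eq : ∀ t : ℝ, ((ρ (expUnit ((t : ℂ) • Λ)) : (V →L[ℂ] V)ˣ) : V →L[ℂ] V)
      = exp ((t : ℂ) • ΛV)

variable {Λ : E →L[ℂ] E}

theorem unit_apply_ne_zero (u : (V →L[ℂ] V)ˣ) {v : V} (hv : v ≠ 0) :
    (u : V →L[ℂ] V) v ≠ 0 := by
  intro h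
  apply hv
  have h2 : (((u⁻¹ : (V →L[ℂ] V)ˣ) : V →L[ℂ] V) * (u : V →L[ℂ] V)) v = 0 := by
    rw [ContinuousLinearMap.mul_apply, h, map_zero]
  rwa [Units.inv_mul, ContinuousLinearMap.one_apply] at h2

theorem unit_apply_injective (u : (V →L[ℂ] V)ˣ) :
    Function.Injective ((u : V →L[ℂ] V) : V → V) := by
  intro a b hab
  have h2 := congrArg (fun x => ((u⁻¹ : (V →L[ℂ] V)ˣ) : V →L[ℂ] V) x) hab
  simpa [← ContinuousLinearMap.mul_apply, Units.inv_mul] using h2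

/-- `f_i(v) = log ‖ρ(A_i) v‖`. -/
def fseq (R : Rep Λ V) (A : ℕ → (E →L[ℂ] E)ˣ) (v : V) (i : ℕ) : ℝ :=
  Real.log ‖(R.ρ (A i) : V →L[ℂ] V) v‖

/-- The quotient topology on the projectivization of a topological vector space. -/
instance : TopologicalSpace (ℙ ℂ V) := instTopologicalSpaceQuotient

/-- The natural action of `GL(E)` on `ℙ(V)` through the representation `R`. -/
def pact (R : Rep Λ V) (u : (E →L[ℂ] E)ˣ) : ℙ ℂ V → ℙ ℂ V :=
  Projectivization.map (((R.ρ u : (V →L[ℂ] V)ˣ) : V →L[ℂ] V) : V →ₗ[ℂ] V)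
    (unit_apply_injective _)

/-- The limit set `Lim(v) ⊆ ℙ(V)`: the union of the `ρ(K_Λ)`-orbits of all subsequential limits
of `[ρ(g_i⁻¹ A_i) v]`. -/
def LimSet (R : Rep Λ V) (A g : ℕ → (E →L[ℂ] E)ˣ) {v : V} (hv : v ≠ 0) :
    Set (ℙ ℂ V) :=
  {y | ∃ (w : V) (hw : w ≠ 0) (k : (E →L[ℂ] E)ˣ), InKΛ Λ k ∧
    y = Projectivization.mk ℂ ((R.ρ k : V →L[ℂ] V) w) (unit_apply_ne_zero _ hw) ∧
    ∃ φ : ℕ → ℕ, StrictMono φ ∧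
      Tendsto (fun j => Projectivization.mk ℂ
          ((R.ρ ((g (φ j))⁻¹ * A (φ j)) : V →L[ℂ] V) v) (unit_apply_ne_zero _ hv))
        atTop (𝓝 (Projectivization.mk ℂ w hw))}

/-- The eigenspace `U` of `Λ` with (real) eigenvalue `c`. -/
def eigU (Λ : E →L[ℂ] E) (c : ℝ) : Submodule ℂ E :=
  Module.End.eigenspace (Λ : E →ₗ[ℂ] E) (c : ℂ)

/-- The weight `d(v) = lim_i i⁻¹ log ‖A_i v‖` for the standard representation of `GL(E)` on `E`
(a junk value if the limit does not exist). -/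
def dstd (A : ℕ → (E →L[ℂ] E)ˣ) (v : E) : ℝ :=
  limUnder atTop fun i : ℕ => Real.log ‖(A i : E →L[ℂ] E) v‖ / i

/-- `p_s = Σ_{k ≤ s} n_k` where `n_k = dim U_k`. -/
def psum (Λ : E →L[ℂ] E) {r : ℕ} (lam : Fin r → ℝ) (s : Fin r) : ℕ :=
  ∑ k ∈ Finset.univ.filter (fun k => k ≤ s), Module.finrank ℂ (eigU Λ (lam k))

/-- `q_s = Σ_{k ≥ s} n_k` where `n_k = dim U_k`. -/
def qsum (Λ : E →L[ℂ] E) {r : ℕ} (lam : Fin r → ℝ) (s : Fin r) : ℕ :=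
  ∑ k ∈ Finset.univ.filter (fun k => s ≤ k), Module.finrank ℂ (eigU Λ (lam k))

/-- A model for the `p`-th exterior power of `E`, with its induced Hermitian metric
(determined by `⟨x₁∧⋯∧x_p, y₁∧⋯∧y_p⟩ = det(⟨x_i, y_j⟩)`), the induced representation of `GL(E)`,
and the induced self-adjoint operator (the derivation extension of `Λ`, pinned down by
`Rep.exp_eq` and equivariance of `wedge`). -/
structure ExtPower (Λ : E →L[ℂ] E) (p : ℕ) where
  P : Type
  [normed : NormedAddCommGroup P]
  [ips : InnerProductSpace ℂ P]
  [fd : FiniteDimensional ℂ P]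
  R : Rep Λ P
  wedge : E [⋀^Fin p]→ₗ[ℂ] P
  wedge_map : ∀ (u : (E →L[ℂ] E)ˣ) (x : Fin p → E),
    ((R.ρ u : (P →L[ℂ] P)ˣ) : P →L[ℂ] P) (wedge x) = wedge fun j => (u : E →L[ℂ] E) (x j)
  wedge_inner : ∀ x y : Fin p → E,
    (inner ℂ (wedge x) (wedge y) : ℂ) = (Matrix.of fun i j : Fin p => (inner ℂ (x i) (y j) : ℂ)).det
  wedge_span : Submodule.span ℂ (Set.range wedge) = ⊤

attribute [instance] ExtPower.normed ExtPower.ips ExtPower.fd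

/-- A bundle of the choices made in Section 2 of the paper: a gauge sequence `g` as in (*)',
the filtration `V_s` (with `V_{r+1} = 0`), complements `W_s` with `V_s = W_s ⊕ V_{s+1}` and
`Lim(W_s) = {[⋀^{n_s} U_s]}`, and identifications `C_i → Id` carrying `g_i⁻¹ A_i · W_s`
onto `U_s`. -/
structure Choices (A : ℕ → (E →L[ℂ] E)ˣ) (Λ : E →L[ℂ] E) (r : ℕ) (lam : Fin r → ℝ)
    (EP : ∀ p : ℕ, ExtPower Λ p) where
  g : ℕ → (E →L[ℂ] E)ˣ
  hg : CondStar' A Λ g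
  Vsub : Fin (r + 1) → Submodule ℂ E
  hVsub : ∀ s : Fin r, (Vsub s.castSucc : Set E) = {v : E | v = 0 ∨ dstd A v ≤ lam s}
  hVlast : Vsub (Fin.last r) = ⊥
  W : Fin r → Submodule ℂ E
  hW_sup : ∀ s : Fin r, W s ⊔ Vsub s.succ = Vsub s.castSucc
  hW_inf : ∀ s : Fin r, W s ⊓ Vsub s.succ = ⊥
  hW_lim : ∀ s : Fin r, ∀ b : Fin (Module.finrank ℂ (eigU Λ (lam s))) → E,
    LinearIndependent ℂ b → Submodule.span ℂ (Set.range b) = W s →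
    ∀ c : Fin (Module.finrank ℂ (eigU Λ (lam s))) → E,
    LinearIndependent ℂ c → Submodule.span ℂ (Set.range c) = eigU Λ (lam s) →
    ∃ (hb : (EP (Module.finrank ℂ (eigU Λ (lam s)))).wedge b ≠ 0)
      (hc : (EP (Module.finrank ℂ (eigU Λ (lam s)))).wedge c ≠ 0),
      LimSet (EP (Module.finrank ℂ (eigU Λ (lam s)))).R A g hb
        = {Projectivization.mk ℂ ((EP (Module.finrank ℂ (eigU Λ (lam s)))).wedge c) hc}
  C : ℕ → (E →L[ℂ] E)ˣ
  hC_lim : Tendsto (fun i => (C i : E →L[ℂ] E)) atTop (𝓝 1)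
  hC_map : ∀ (s : Fin r) (i : ℕ),
    Submodule.map ((((C i * (g i)⁻¹ * A i : (E →L[ℂ] E)ˣ) : E →L[ℂ] E) : E →ₗ[ℂ] E)) (W s)
      = eigU Λ (lam s)

/-- A model for the symmetric algebra `Sym(E*) = ⊕_k Sym^k(E*)` on the dual of `E`:
each graded piece is a Hermitian space carrying a compatible representation of `GL(E)`
(induced by the dual of the standard representation), `gen` identifies the degree-one piece
with `E*` equivariantly, and the product is bilinear, equivariant, has no zero divisors, and
together with the generators spans each graded piece. -/
structure SymModel (Λ : E →L[ℂ] E) where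
  P : ℕ → Type
  [normed : ∀ k, NormedAddCommGroup (P k)]
  [ips : ∀ k, InnerProductSpace ℂ (P k)]
  [fd : ∀ k, FiniteDimensional ℂ (P k)]
  R : ∀ k, Rep Λ (P k)
  mul : ∀ {k l : ℕ}, P k →ₗ[ℂ] P l →ₗ[ℂ] P (k + l)
  mul_equivariant : ∀ {k l : ℕ} (u : (E →L[ℂ] E)ˣ) (x : P k) (y : P l),
    (((R (k + l)).ρ u : (P (k + l) →L[ℂ] P (k + l))ˣ) : P (k + l) →L[ℂ] P (k + l)) (mul x y)
      = mul ((((R k).ρ u : (P k →L[ℂ] P k)ˣ) : P k →L[ℂ] P k) x)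
            ((((R l).ρ u : (P l →L[ℂ] P l)ˣ) : P l →L[ℂ] P l) y)
  mul_ne_zero : ∀ {k l : ℕ} {x : P k} {y : P l}, x ≠ 0 → y ≠ 0 → mul x y ≠ 0
  gen : (E →L[ℂ] ℂ) ≃ₗ[ℂ] P 1
  gen_equivariant : ∀ (u : (E →L[ℂ] E)ˣ) (l : E →L[ℂ] ℂ),
    (((R 1).ρ u : (P 1 →L[ℂ] P 1)ˣ) : P 1 →L[ℂ] P 1) (gen l)
      = gen (l.comp (((u⁻¹ : (E →L[ℂ] E)ˣ) : E →L[ℂ] E)))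
  span_gen_mul : ∀ k : ℕ, Submodule.span ℂ
      {z : P (k + 1) | ∃ (x : P k) (l : E →L[ℂ] ℂ), z = mul x (gen l)} = ⊤

attribute [instance] SymModel.normed SymModel.ips SymModel.fd

/-! Both conditions only involve the C⋆-algebra `E →L[ℂ] E` and its unitary group, which is
compact. For (*) ⇒ (*)', choose unitaries `k_i` for which `k_i e^Λ k_i⋆` is as close as possible
to both `B_{i+1}` and `B_{i+2}`; (*) and compactness force this distance to `0`. Then
`k_{i+1} e^Λ k_{i+1}⋆ - k_i e^Λ k_i⋆ → 0`, so by compactness `k_i ≈ k_{i+1} d_i` with `d_i` in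
the stabilizer `K_Λ`, and `g_{i+1} = k_i d_{i-1} ⋯ d_0` is a slowly varying gauge. For
(*)' ⇒ (*), along a subsequence with `g_α → u` slow variation gives `g_{α+1}, g_{α+2} → u`, hence
`B_{α+1}, B_{α+2} → u e^Λ u⋆`. -/

theorem _root_.Filter.tendsto_of_strictMono_subseq_tendsto {α : Type*} {x : ℕ → α}
    {f : Filter α}
    (h : ∀ φ : ℕ → ℕ, StrictMono φ → ∃ ψ : ℕ → ℕ, Tendsto (fun j => x (φ (ψ j))) atTop f) :
    Tendsto x atTop f :=
  tendsto_of_subseq_tendsto fun _ hns =>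
    let ⟨φ, _, hφ⟩ := strictMono_subseq_of_tendsto_atTop hns
    let ⟨ψ, hψ⟩ := h _ hφ
    ⟨φ ∘ ψ, hψ⟩

theorem _root_.IsCompact.exists_seq_tendsto_zero_of_subseq {X : Type*} [TopologicalSpace X]
    {K : Set X} (hK : IsCompact K) (hne : K.Nonempty) {f : ℕ → X → ℝ}
    (hf : ∀ i, ContinuousOn (f i) K) (hf0 : ∀ i x, 0 ≤ f i x)
    (h : ∀ φ : ℕ → ℕ, StrictMono φ →
      ∃ ψ : ℕ → ℕ, ∃ x ∈ K, Tendsto (fun j => f (φ (ψ j)) x) atTop (𝓝 0)) :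
    ∃ k : ℕ → X, (∀ i, k i ∈ K) ∧ Tendsto (fun i => f i (k i)) atTop (𝓝 0) := by
  choose k hkK hkmin using fun i => hK.exists_isMinOn hne (hf i)
  refine ⟨k, hkK, tendsto_of_strictMono_subseq_tendsto fun φ hφ => ?_⟩
  obtain ⟨ψ, x, hxK, hx⟩ := h φ hφ
  exact ⟨ψ, squeeze_zero (fun _ => hf0 _ _) (fun _ => hkmin _ hxK) hx⟩

theorem _root_.Units.val_inv_eq_star_of_mem_unitary {M : Type*} [Monoid M] [StarMul M] {u : Mˣ}
    (hu : (u : M) ∈ unitary M) : ((u⁻¹ : Mˣ) : M) = star (u : M) :=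
  Units.inv_eq_of_mul_eq_one_left (Unitary.star_mul_self_of_mem hu)

theorem _root_.Units.val_conj_of_mem_unitary {M : Type*} [Monoid M] [StarMul M] {u : Mˣ}
    (hu : (u : M) ∈ unitary M) (v : Mˣ) : ((u * v * u⁻¹ : Mˣ) : M) = u * v * star (u : M) := by
  rw [Units.val_mul, Units.val_mul, Units.val_inv_eq_star_of_mem_unitary hu]

section CStarRing

variable {R : Type*} [NormedRing R] [StarRing R] [CStarRing R]

theorem isCompact_unitary [ProperSpace R] : IsCompact (unitary R : Set R) := by
  rcases subsingleton_or_nontrivial R with hR | hR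
  · exact Set.subsingleton_of_subsingleton.isCompact
  · exact Metric.isCompact_of_isClosed_isBounded isClosed_unitary <|
      isBounded_iff_forall_norm_le.mpr ⟨1, fun u hu => (CStarRing.norm_of_mem_unitary hu).le⟩

theorem isCompact_unitary_commute [ProperSpace R] (a : R) :
    IsCompact {c : R | c ∈ unitary R ∧ Commute c a} :=
  isCompact_unitary.inter_right (isClosed_eq (by fun_prop) (by fun_prop))

theorem conj_mul_of_commute {a c : R} (hc : c ∈ unitary R) (hca : Commute c a) (x : R) :
    x * c * a * star (x * c) = x * a * star x :=
  calc x * c * a * star (x * c) = x * (c * a * star c) * star x := by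
        simp only [star_mul, mul_assoc]
    _ = x * a * star x := by rw [hca.eq, mul_assoc a, Unitary.mul_star_self_of_mem hc, mul_one]

theorem commute_star_mul_of_conj_eq {a u v : R} (hu : u ∈ unitary R) (hv : v ∈ unitary R)
    (h : v * a * star v = u * a * star u) : Commute (star u * v) a :=
  calc star u * v * a = star u * (v * a * star v) * v := by
        simp only [mul_assoc, Unitary.star_mul_self_of_mem hv, mul_one]
    _ = star u * (u * a * star u) * v := by rw [h]
    _ = a * (star u * v) := by simp only [← mul_assoc, Unitary.star_mul_self_of_mem hu, one_mul]

/-- Condition (*) in a C⋆-ring, for `B i = B_i` and `a = e^Λ`. -/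
def SubseqConjLimits (a : R) (B : ℕ → R) : Prop :=
  ∀ φ : ℕ → ℕ, StrictMono φ → ∃ ψ : ℕ → ℕ, StrictMono ψ ∧ ∃ u ∈ unitary R,
    Tendsto (fun j => B (φ (ψ j) + 1)) atTop (𝓝 (u * a * star u)) ∧
    Tendsto (fun j => B (φ (ψ j) + 2)) atTop (𝓝 (u * a * star u))

/-- Condition (*)' in a C⋆-ring, for `B i = B_i` and `a = e^Λ`, with `B_i g_i e^{-Λ} g_i⁻¹ → 1`
replaced by the equivalent `B_i - g_i e^Λ g_i⋆ → 0` (`tendsto_mul_conj_inv_iff`). -/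
structure IsAdaptedGauge (a : R) (B g : ℕ → R) : Prop where
  zero : g 0 = 1
  mem_unitary : ∀ i, g i ∈ unitary R
  tendsto_sub_conj : Tendsto (fun i => B i - g i * a * star (g i)) atTop (𝓝 0)
  tendsto_star_mul : Tendsto (fun i => star (g (i - 1)) * g i) atTop (𝓝 1)

theorem SubseqConjLimits.exists_unitary_approx [ProperSpace R] {a : R} {B : ℕ → R}
    (hB : SubseqConjLimits a B) :
    ∃ k : ℕ → R, (∀ i, k i ∈ unitary R) ∧
      Tendsto (fun i => ‖B (i + 1) - k i * a * star (k i)‖) atTop (𝓝 0) ∧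
      Tendsto (fun i => ‖B (i + 2) - k i * a * star (k i)‖) atTop (𝓝 0) := by
  obtain ⟨k, hk, hsum⟩ := isCompact_unitary.exists_seq_tendsto_zero_of_subseq ⟨1, one_mem _⟩
    (f := fun i x => ‖B (i + 1) - x * a * star x‖ + ‖B (i + 2) - x * a * star x‖)
    (fun i => by fun_prop) (fun i x => by positivity) fun φ hφ => by
      obtain ⟨ψ, -, u, hu, h1, h2⟩ := hB φ hφ
      refine ⟨ψ, u, hu, ?_⟩
      simpa using (h1.sub_const (u * a * star u)).norm.add (h2.sub_const (u * a * star u)).norm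
  exact ⟨k, hk,
    squeeze_zero (fun _ => norm_nonneg _) (fun _ => le_add_of_nonneg_right (norm_nonneg _)) hsum,
    squeeze_zero (fun _ => norm_nonneg _) (fun _ => le_add_of_nonneg_left (norm_nonneg _)) hsum⟩

theorem exists_commute_unitary_approx [ProperSpace R] {a : R} {x y : ℕ → R}
    (hx : ∀ i, x i ∈ unitary R) (hy : ∀ i, y i ∈ unitary R)
    (h : Tendsto (fun i => y i * a * star (y i) - x i * a * star (x i)) atTop (𝓝 0)) :
    ∃ d : ℕ → R, (∀ i, d i ∈ unitary R ∧ Commute (d i) a) ∧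
      Tendsto (fun i => ‖x i - y i * d i‖) atTop (𝓝 0) := by
  refine (isCompact_unitary_commute a).exists_seq_tendsto_zero_of_subseq
    ⟨1, one_mem _, Commute.one_left a⟩ (f := fun i c => ‖x i - y i * c‖) (fun i => by fun_prop)
    (fun _ _ => norm_nonneg _) fun φ hφ => ?_
  obtain ⟨⟨u, v⟩, ⟨hu, hv⟩, ψ, hψ, huv⟩ :=
    (isCompact_unitary.prod isCompact_unitary).tendsto_subseq
      (x := fun j => (x (φ j), y (φ j))) fun j => ⟨hx _, hy _⟩
  have hxu : Tendsto (fun j => x (φ (ψ j))) atTop (𝓝 u) := (continuous_fst.tendsto _).comp huv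
  have hyv : Tendsto (fun j => y (φ (ψ j))) atTop (𝓝 v) := (continuous_snd.tendsto _).comp huv
  have hconj : u * a * star u = v * a * star v := by
    refine (sub_eq_zero.mp (tendsto_nhds_unique ?_ (h.comp (hφ.comp hψ).tendsto_atTop))).symm
    exact ((hyv.mul_const a).mul hyv.star).sub ((hxu.mul_const a).mul hxu.star)
  refine ⟨ψ, star v * u,
    ⟨mul_mem (Unitary.star_mem hv) hu, commute_star_mul_of_conj_eq hv hu hconj⟩, ?_⟩
  simpa [← mul_assoc, Unitary.mul_star_self_of_mem hv] using
    (hxu.sub (hyv.mul_const (star v * u))).norm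

def prodRev (d : ℕ → R) : ℕ → R
  | 0 => 1
  | m + 1 => d m * prodRev d m

theorem exists_gauge_of_approx {a : R} {k d : ℕ → R} (hk : ∀ i, k i ∈ unitary R)
    (hd : ∀ i, d i ∈ unitary R ∧ Commute (d i) a)
    (h : Tendsto (fun i => ‖k i - k (i + 1) * d i‖) atTop (𝓝 0)) :
    ∃ g : ℕ → R, g 0 = 1 ∧ (∀ i, g i ∈ unitary R) ∧
      (∀ i, g (i + 1) * a * star (g (i + 1)) = k i * a * star (k i)) ∧
      Tendsto (fun i => ‖g (i + 2) - g (i + 1)‖) atTop (𝓝 0) := by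
  have hc : ∀ m, prodRev d m ∈ unitary R ∧ Commute (prodRev d m) a := by
    intro m
    induction m with
    | zero => exact ⟨one_mem _, Commute.one_left a⟩
    | succ m ih => exact ⟨mul_mem (hd m).1 ih.1, (hd m).2.mul_left ih.2⟩
  refine ⟨fun | 0 => 1 | m + 1 => k m * prodRev d m, rfl, ?_,
    fun i => conj_mul_of_commute (hc i).1 (hc i).2 (k i), h.congr fun i => ?_⟩
  · rintro (_ | m)
    exacts [one_mem _, mul_mem (hk m) (hc m).1]
  · change ‖k i - k (i + 1) * d i‖ = ‖k (i + 1) * (d i * prodRev d i) - k i * prodRev d i‖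
    rw [← mul_assoc, ← sub_mul, CStarRing.norm_mul_mem_unitary _ (hc i).1, norm_sub_rev]

theorem SubseqConjLimits.exists_isAdaptedGauge [ProperSpace R] {a : R} {B : ℕ → R}
    (hB : SubseqConjLimits a B) : ∃ g : ℕ → R, IsAdaptedGauge a B g := by
  obtain ⟨k, hk, hBk₁, hBk₂⟩ := hB.exists_unitary_approx
  have hk_succ : Tendsto (fun i => k (i + 1) * a * star (k (i + 1)) - k i * a * star (k i))
      atTop (𝓝 0) := by
    rw [tendsto_zero_iff_norm_tendsto_zero]
    refine squeeze_zero (fun _ => norm_nonneg _) (fun i => norm_sub_le_norm_sub_add_norm_sub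
      _ (B (i + 2)) _) ?_
    simpa [norm_sub_rev] using (hBk₁.comp (tendsto_add_atTop_nat 1)).add hBk₂
  obtain ⟨d, hd, hkd⟩ := exists_commute_unitary_approx hk (fun i => hk (i + 1)) hk_succ
  obtain ⟨g, hg0, hg, hgk, hgg⟩ := exists_gauge_of_approx hk hd hkd
  refine ⟨g, ⟨hg0, hg, ?_, ?_⟩⟩
  · rw [tendsto_zero_iff_norm_tendsto_zero, ← tendsto_add_atTop_iff_nat 1]
    simpa only [hgk] using hBk₁
  · rw [tendsto_iff_norm_sub_tendsto_zero, ← tendsto_add_atTop_iff_nat 2]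
    refine hgg.congr fun i => ?_
    change _ = ‖star (g (i + 1)) * g (i + 2) - 1‖
    rw [← Unitary.star_mul_self_of_mem (hg (i + 1)), ← mul_sub,
      CStarRing.norm_mem_unitary_mul _ (Unitary.star_mem (hg (i + 1)))]

theorem IsAdaptedGauge.subseqConjLimits [ProperSpace R] {a : R} {B g : ℕ → R}
    (hg : IsAdaptedGauge a B g) : SubseqConjLimits a B := by
  have hnext : Tendsto (fun i => star (g i) * g (i + 1)) atTop (𝓝 1) := by
    simpa using (tendsto_add_atTop_iff_nat 1).2 hg.tendsto_star_mul
  have hg_succ : ∀ (n : ℕ → ℕ) (u : R), Tendsto n atTop atTop →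
      Tendsto (fun j => g (n j)) atTop (𝓝 u) → Tendsto (fun j => g (n j + 1)) atTop (𝓝 u) :=
    fun n u hn hu => by
      simpa [← mul_assoc, Unitary.mul_star_self_of_mem (hg.mem_unitary _)] using
        hu.mul (hnext.comp hn)
  have hB : ∀ (n : ℕ → ℕ) (u : R), Tendsto n atTop atTop →
      Tendsto (fun j => g (n j)) atTop (𝓝 u) →
      Tendsto (fun j => B (n j)) atTop (𝓝 (u * a * star u)) :=
    fun n u hn hu => by
      simpa using (hg.tendsto_sub_conj.comp hn).add ((hu.mul_const a).mul hu.star)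
  intro φ hφ
  obtain ⟨u, hu, ψ, hψ, hgu⟩ :=
    isCompact_unitary.tendsto_subseq fun j => hg.mem_unitary (φ j)
  have hn : Tendsto (fun j => φ (ψ j)) atTop atTop := (hφ.comp hψ).tendsto_atTop
  have hn₁ : Tendsto (fun j => φ (ψ j) + 1) atTop atTop := (tendsto_add_atTop_nat 1).comp hn
  have hgu₁ := hg_succ _ u hn hgu
  exact ⟨ψ, hψ, u, hu, hB _ u hn₁ hgu₁, hB _ u ((tendsto_add_atTop_nat 1).comp hn₁)
    (hg_succ _ u hn₁ hgu₁)⟩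

theorem subseqConjLimits_iff_exists_isAdaptedGauge [ProperSpace R] {a : R} {B : ℕ → R} :
    SubseqConjLimits a B ↔ ∃ g : ℕ → R, IsAdaptedGauge a B g :=
  ⟨SubseqConjLimits.exists_isAdaptedGauge, fun ⟨_, hg⟩ => hg.subseqConjLimits⟩

theorem tendsto_mul_conj_inv_iff {u : Rˣ} {B g : ℕ → R} (hg : ∀ i, g i ∈ unitary R) :
    Tendsto (fun i => B i * (g i * ↑u⁻¹ * star (g i))) atTop (𝓝 1) ↔
      Tendsto (fun i => B i - g i * u * star (g i)) atTop (𝓝 0) := by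
  have hconj_mul : ∀ (x y : R) i, g i * x * star (g i) * (g i * y * star (g i))
      = g i * (x * y) * star (g i) := fun x y i => by
    simp only [mul_assoc, ← mul_assoc (star (g i)), Unitary.star_mul_self_of_mem (hg i), one_mul]
  have hconj_one : ∀ i, g i * 1 * star (g i) = 1 := fun i => by
    rw [mul_one, Unitary.mul_star_self_of_mem (hg i)]
  have hbdd : ∀ x : R, IsBoundedUnder (· ≤ ·) atTop fun i => ‖g i * x * star (g i)‖ :=
    fun x => isBoundedUnder_of ⟨‖x‖, fun i => by
      rw [CStarRing.norm_mul_mem_unitary _ (Unitary.star_mem (hg i)),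
        CStarRing.norm_mem_unitary_mul _ (hg i)]⟩
  rw [← tendsto_sub_nhds_zero_iff]
  constructor
  · intro h
    refine (h.zero_mul_isBoundedUnder_le (hbdd u)).congr fun i => ?_
    rw [sub_mul, one_mul, mul_assoc, hconj_mul, Units.inv_mul, hconj_one, mul_one]
  · intro h
    refine (h.zero_mul_isBoundedUnder_le (hbdd ↑u⁻¹)).congr fun i => ?_
    rw [sub_mul, hconj_mul, Units.mul_inv, hconj_one]

end CStarRing

theorem condStar_iff_subseqConjLimits (Λ : E →L[ℂ] E) (A : ℕ → (E →L[ℂ] E)ˣ) :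
    CondStar A Λ ↔ SubseqConjLimits (expUnit Λ : E →L[ℂ] E) fun i => (Bseq A i : E →L[ℂ] E) := by
  refine forall₂_congr fun φ _ => exists_congr fun ψ => and_congr_right fun _ => ⟨?_, ?_⟩
  · rintro ⟨g, hg, h₁, h₂⟩
    rw [Units.val_conj_of_mem_unitary hg] at h₁ h₂
    exact ⟨g, hg, h₁, h₂⟩
  · rintro ⟨u, hu, h₁, h₂⟩
    refine ⟨Unitary.toUnits ⟨u, hu⟩, hu, ?_⟩
    rw [Units.val_conj_of_mem_unitary (u := Unitary.toUnits ⟨u, hu⟩) hu]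
    exact ⟨h₁, h₂⟩

theorem condStar'_iff_isAdaptedGauge (Λ : E →L[ℂ] E) (A g : ℕ → (E →L[ℂ] E)ˣ) :
    CondStar' A Λ g ↔ IsAdaptedGauge (expUnit Λ : E →L[ℂ] E) (fun i => (Bseq A i : E →L[ℂ] E))
      fun i => (g i : E →L[ℂ] E) := by
  have hB : ∀ i, (g i : E →L[ℂ] E) ∈ unitary (E →L[ℂ] E) →
      ((Bseq A i * g i * expUnit (-Λ) * (g i)⁻¹ : (E →L[ℂ] E)ˣ) : E →L[ℂ] E)
        = Bseq A i * (g i * ↑(expUnit Λ)⁻¹ * star (g i : E →L[ℂ] E)) := fun i hg => by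
    rw [show expUnit (-Λ) = (expUnit Λ)⁻¹ from Units.ext rfl]
    simp only [Units.val_mul, Units.val_inv_eq_star_of_mem_unitary hg, mul_assoc]
  have hg : ∀ i, (g (i - 1) : E →L[ℂ] E) ∈ unitary (E →L[ℂ] E) →
      (((g (i - 1))⁻¹ * g i : (E →L[ℂ] E)ˣ) : E →L[ℂ] E)
        = star (g (i - 1) : E →L[ℂ] E) * g i := fun i hg => by
    rw [Units.val_mul, Units.val_inv_eq_star_of_mem_unitary hg]
  constructor
  · rintro ⟨h0, hU, hBg, hgg⟩
    refine ⟨by rw [h0, Units.val_one], hU, ?_, ?_⟩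
    · exact (tendsto_mul_conj_inv_iff hU).1 (by simpa only [hB _ (hU _)] using hBg)
    · simpa only [hg _ (hU _)] using hgg
  · rintro ⟨h0, hU, hBg, hgg⟩
    refine ⟨Units.val_eq_one.mp h0, hU, ?_, ?_⟩
    · simpa only [hB _ (hU _)] using (tendsto_mul_conj_inv_iff hU).2 hBg
    · simpa only [hg _ (hU _)] using hgg

theorem exists_condStar'_iff_exists_isAdaptedGauge (Λ : E →L[ℂ] E) (A : ℕ → (E →L[ℂ] E)ˣ) :
    (∃ g, CondStar' A Λ g) ↔ ∃ g : ℕ → E →L[ℂ] E,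
      IsAdaptedGauge (expUnit Λ : E →L[ℂ] E) (fun i => (Bseq A i : E →L[ℂ] E)) g := by
  simp only [condStar'_iff_isAdaptedGauge]
  exact ⟨fun ⟨_, hg⟩ => ⟨_, hg⟩,
    fun ⟨g, hg⟩ => ⟨fun i => Unitary.toUnits ⟨g i, hg.mem_unitary i⟩, hg⟩⟩

theorem condStar_iff_condStar'_general (Λ : E →L[ℂ] E) (A : ℕ → (E →L[ℂ] E)ˣ) :
    CondStar A Λ ↔ ∃ g : ℕ → (E →L[ℂ] E)ˣ, CondStar' A Λ g := by
  rw [condStar_iff_subseqConjLimits, exists_condStar'_iff_exists_isAdaptedGauge]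
  exact subseqConjLimits_iff_exists_isAdaptedGauge

/-- Condition (*) holds for the sequence `(A_i)` if and only if
condition (*)' holds for it (i.e. some gauge sequence `g` as in (*)' exists). -/
theorem condStar_iff_condStar' (Λ : E →L[ℂ] E) (hΛ : IsSelfAdjoint Λ)
    (A : ℕ → (E →L[ℂ] E)ˣ) (hA0 : A 0 = 1) :
    CondStar A Λ ↔ ∃ g : ℕ → (E →L[ℂ] E)ˣ, CondStar' A Λ g :=
  condStar_iff_condStar'_general Λ A

end CSW
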